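/- Let D and K̄ be m×m diagonal matrices, D with positive diagonal entries and K̄ with diagonal entries k̄₁,…,k̄ₘ > 0, and let μ > 0. Define ĝ(τ) := maxᵢ |1 - τ k̄ᵢ| + μ τ², let τ̄_s > 0 be the unique positive solution of ĝ(τ̄_s) = 1, let τ̄_o ∈ [0, τ̄_s] be a minimizer of ĝ over [0, τ̄_s], and set ρ := ĝ(τ̄_o) < 1. Let e₀ ∈ ℝᵐ and suppose that for each h = 0, 1, 2, … there is a function y_h : [0, τ̄_o] → ℝᵐ with y_h(0) = e_h and ‖y_h(τ) - (I - τ K̄) e_h‖_{D,2} ≤ μ τ² ‖e_h‖_{D,2} for all τ ∈ [0, τ̄_o], and suppose e_{h+1} is chosen so that ‖e_{h+1}‖_{D,2} ≤ ‖y_h(τ)‖_{D,2} for all τ ∈ [0, τ̄_o] (e.g., e_{h+1} = y_h(τ_h) at a time τ_h minimizing the weighted norm along the trajectory). Then for all h ≥ 0, ‖e_h‖_{D,2} ≤ ρʰ ‖e₀‖_{D,2}. -/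

import Mathlib

/-! At the offline time `τ̄_o` the predicted error `(I - τ̄_o K̄) e_h` has weighted norm at most
`maxᵢ |1 - τ̄_o k̄ᵢ| ‖e_h‖`, and the trajectory deviates from it by at most `μ τ̄_o² ‖e_h‖`; so the
selected `e_{h+1}`, being no larger than `y_h(τ̄_o)`, satisfies `‖e_{h+1}‖ ≤ ĝ(τ̄_o) ‖e_h‖ = ρ ‖e_h‖`. -/

open Finset

section WeightedNorm

variable {ι : Type*} [Fintype ι]

noncomputable def weightedNorm (d x : ι → ℝ) : ℝ := √(∑ i, (d i * x i) ^ 2)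

theorem weightedNorm_eq_norm (d x : ι → ℝ) : weightedNorm d x = ‖WithLp.toLp 2 (d * x)‖ := by
  simp [weightedNorm, EuclideanSpace.norm_eq, ← abs_mul, sq_abs]

theorem weightedNorm_add_le (d x y : ι → ℝ) :
    weightedNorm d (x + y) ≤ weightedNorm d x + weightedNorm d y := by
  simp only [weightedNorm_eq_norm, mul_add, WithLp.toLp_add]
  exact norm_add_le _ _

theorem weightedNorm_mul_le {c : ι → ℝ} {M : ℝ} (hM0 : 0 ≤ M) (hM : ∀ i, |c i| ≤ M)
    (d x : ι → ℝ) : weightedNorm d (c * x) ≤ M * weightedNorm d x := by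
  have hsq : ∑ i, (d i * (c i * x i)) ^ 2 ≤ M ^ 2 * ∑ i, (d i * x i) ^ 2 := by
    rw [mul_sum]
    refine sum_le_sum fun i _ => ?_
    have hc : c i ^ 2 ≤ M ^ 2 := sq_le_sq' (abs_le.mp (hM i)).1 (abs_le.mp (hM i)).2
    nlinarith [sq_nonneg (d i * x i)]
  calc weightedNorm d (c * x) ≤ √(M ^ 2 * ∑ i, (d i * x i) ^ 2) := Real.sqrt_le_sqrt hsq
    _ = M * weightedNorm d x := by rw [Real.sqrt_mul (sq_nonneg M), Real.sqrt_sq hM0, weightedNorm]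

theorem weightedNorm_le_of_sub_mul_le {c : ι → ℝ} {M r : ℝ} (hM0 : 0 ≤ M) (hM : ∀ i, |c i| ≤ M)
    (d e y : ι → ℝ) (hy : weightedNorm d (y - c * e) ≤ r * weightedNorm d e) :
    weightedNorm d y ≤ (M + r) * weightedNorm d e :=
  calc weightedNorm d y = weightedNorm d (c * e + (y - c * e)) := by rw [add_sub_cancel]
    _ ≤ weightedNorm d (c * e) + weightedNorm d (y - c * e) := weightedNorm_add_le d _ _
    _ ≤ M * weightedNorm d e + r * weightedNorm d e := add_le_add (weightedNorm_mul_le hM0 hM d e) hy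
    _ = (M + r) * weightedNorm d e := by ring

end WeightedNorm

theorem stmt_14_general (m : ℕ) [NeZero m] (d k : Fin m → ℝ)
    (μ : ℝ) (hμ : 0 < μ)
    (τs τo ρ : ℝ)
    (hτo : τo ∈ Set.Icc 0 τs)
    (hρ : ρ = Finset.univ.sup' Finset.univ_nonempty (fun i => |1 - τo * k i|) + μ * τo ^ 2)
    (e : ℕ → Fin m → ℝ) (y : ℕ → ℝ → Fin m → ℝ)
    (hrem : ∀ h : ℕ, ∀ τ ∈ Set.Icc (0 : ℝ) τo,
      Real.sqrt (∑ i, (d i * (y h τ i - (1 - τ * k i) * e h i)) ^ 2) ≤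
        μ * τ ^ 2 * Real.sqrt (∑ i, (d i * e h i) ^ 2))
    (hsel : ∀ h : ℕ, ∀ τ ∈ Set.Icc (0 : ℝ) τo,
      Real.sqrt (∑ i, (d i * e (h + 1) i) ^ 2) ≤ Real.sqrt (∑ i, (d i * y h τ i) ^ 2)) :
    ∀ h : ℕ,
      Real.sqrt (∑ i, (d i * e h i) ^ 2) ≤ ρ ^ h * Real.sqrt (∑ i, (d i * e 0 i) ^ 2) := by
  set M := Finset.univ.sup' Finset.univ_nonempty (fun i => |1 - τo * k i|)
  have hM : ∀ i, |1 - τo * k i| ≤ M := fun i => le_sup' (fun i => |1 - τo * k i|) (mem_univ i)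
  have hM0 : 0 ≤ M := (abs_nonneg _).trans (hM 0)
  have hρ0 : 0 ≤ ρ := hρ ▸ by positivity
  have hτo_mem : τo ∈ Set.Icc 0 τo := ⟨hτo.1, le_rfl⟩
  have step (h : ℕ) : weightedNorm d (e (h + 1)) ≤ ρ * weightedNorm d (e h) :=
    (hsel h τo hτo_mem).trans
      (hρ ▸ weightedNorm_le_of_sub_mul_le hM0 hM d (e h) (y h τo) (hrem h τo hτo_mem))
  exact fun h => le_geom (u := fun n => weightedNorm d (e n)) hρ0 h fun n _ => step n

/-- First part of Proposition 4 of the paper (online model-predictive strategy): with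
`ĝ(τ) = maxᵢ |1 - τ k̄ᵢ| + μτ²`, `τ̄_s > 0` the unique positive solution of `ĝ(τ̄_s) = 1`,
`τ̄_o` a minimizer of `ĝ` over `[0, τ̄_s]` and `ρ = ĝ(τ̄_o) < 1`, if at each step `h` the
intersample trajectory `y_h` starts at `e_h`, satisfies the remainder bound
`‖y_h(τ) - (I - τK̄)e_h‖_{D,2} ≤ μ τ² ‖e_h‖_{D,2}` on `[0, τ̄_o]`, and `e_{h+1}` is chosen
with `‖e_{h+1}‖_{D,2} ≤ ‖y_h(τ)‖_{D,2}` for all `τ ∈ [0, τ̄_o]`, then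
`‖e_h‖_{D,2} ≤ ρʰ ‖e_0‖_{D,2}` for all `h`. Here `‖x‖_{D,2} = √(∑ i, (dᵢ xᵢ)²)`. -/
theorem stmt_14 (m : ℕ) [NeZero m] (d k : Fin m → ℝ)
    (hd : ∀ i, 0 < d i) (hk : ∀ i, 0 < k i) (μ : ℝ) (hμ : 0 < μ)
    (τs τo ρ : ℝ) (hτs : 0 < τs)
    (hgs : Finset.univ.sup' Finset.univ_nonempty (fun i => |1 - τs * k i|) + μ * τs ^ 2 = 1)
    (hus : ∀ τ : ℝ, 0 < τ →
      Finset.univ.sup' Finset.univ_nonempty (fun i => |1 - τ * k i|) + μ * τ ^ 2 = 1 → τ = τs)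
    (hτo : τo ∈ Set.Icc 0 τs)
    (hmin : ∀ τ ∈ Set.Icc (0 : ℝ) τs,
      Finset.univ.sup' Finset.univ_nonempty (fun i => |1 - τo * k i|) + μ * τo ^ 2 ≤
        Finset.univ.sup' Finset.univ_nonempty (fun i => |1 - τ * k i|) + μ * τ ^ 2)
    (hρ : ρ = Finset.univ.sup' Finset.univ_nonempty (fun i => |1 - τo * k i|) + μ * τo ^ 2)
    (hρ1 : ρ < 1)
    (e : ℕ → Fin m → ℝ) (y : ℕ → ℝ → Fin m → ℝ)
    (hy0 : ∀ h : ℕ, y h 0 = e h)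
    (hrem : ∀ h : ℕ, ∀ τ ∈ Set.Icc (0 : ℝ) τo,
      Real.sqrt (∑ i, (d i * (y h τ i - (1 - τ * k i) * e h i)) ^ 2) ≤
        μ * τ ^ 2 * Real.sqrt (∑ i, (d i * e h i) ^ 2))
    (hsel : ∀ h : ℕ, ∀ τ ∈ Set.Icc (0 : ℝ) τo,
      Real.sqrt (∑ i, (d i * e (h + 1) i) ^ 2) ≤ Real.sqrt (∑ i, (d i * y h τ i) ^ 2)) :
    ∀ h : ℕ,
      Real.sqrt (∑ i, (d i * e h i) ^ 2) ≤ ρ ^ h * Real.sqrt (∑ i, (d i * e 0 i) ^ 2) :=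
  stmt_14_general m d k μ hμ τs τo ρ hτo hρ e y hrem hsel
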